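/- The Haar functional h on the twisted sphere 𝕊_q^N is a trace: h(fg) = h(gf) for all f, g ∈ 𝕊_q^N. Equivalently, for a monomial x^{i_1}⋯x^{i_{2n}} on which h does not vanish (so its multiset of indices is a union of companion pairs {j,j'}), cyclically rotating the last generator to the front leaves the value of h unchanged: h(x^{i_1}⋯x^{i_{2n}}) = h(x^{i_{2n}} x^{i_1}⋯x^{i_{2n-1}}). -/

import Mathlib

/-- The defining relations of the twisted quantum Euclidean plane:
`x^a x^b = q(a,b) x^b x^a`. -/
def twistRel {N : ℕ} (q : Fin N → Fin N → ℂ) :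
    FreeAlgebra ℂ (Fin N) → FreeAlgebra ℂ (Fin N) → Prop :=
  fun u v => ∃ a b : Fin N,
    u = FreeAlgebra.ι ℂ a * FreeAlgebra.ι ℂ b ∧
    v = q a b • (FreeAlgebra.ι ℂ b * FreeAlgebra.ι ℂ a)

/-- The twisted quantum Euclidean plane `ℝ_q^N`. -/
abbrev TwistedPlane {N : ℕ} (q : Fin N → Fin N → ℂ) := RingQuot (twistRel q)

/-- The coordinate generators of the twisted plane. -/
def X {N : ℕ} (q : Fin N → Fin N → ℂ) (a : Fin N) : TwistedPlane q :=
  RingQuot.mkAlgHom ℂ (twistRel q) (FreeAlgebra.ι ℂ a)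

/-- The central element `c = Σ_a x^a x^{a'}` (with `g_{ab} = δ_{a,b'}`,
primed index `a' = Fin.rev a`). -/
def cElem {N : ℕ} (q : Fin N → Fin N → ℂ) : TwistedPlane q :=
  ∑ a, X q a * X q (Fin.rev a)

/-!
Monomials span the twisted plane, so `h` is a trace once it is invariant under rotating a
monomial `x^{i_1} ⋯ x^{i_k}` to `x^{i_k} x^{i_1} ⋯ x^{i_{k-1}}`; the q-commutation relations turn
the first into `Π_l q(i_l, i_k)` times the second. If `h` does not vanish on the monomial, then
`k = 2m` is even and its indices pair up into companions `{j, j'}`: otherwise `Δ^m` already kills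
it, so `h` does too. On such a monomial the product is `1`, because `q(j, i_k) q(j', i_k) = 1`
and `q(i_k, i_k) = 1`.
-/

theorem List.exists_ofFn_eq {α : Type*} {k : ℕ} (L : List α) (hL : L.length = k) :
    ∃ i : Fin k → α, List.ofFn i = L := by
  subst hL
  exact ⟨L.get, L.ofFn_get⟩

section ListProd

variable {R A M ι : Type*} [CommSemiring R] [Semiring A] [Algebra R A] [AddCommMonoid M]
  [Module R M]

theorem Algebra.span_range_list_prod_of_adjoin_eq_top {x : ι → A}
    (hx : Algebra.adjoin R (Set.range x) = ⊤) :
    Submodule.span R (Set.range fun L : List ι => (L.map x).prod) = ⊤ := by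
  have hrange : (Set.range fun L : List ι => (L.map x).prod) = Submonoid.closure (Set.range x) := by
    rw [← FreeMonoid.mrange_lift, MonoidHom.coe_mrange]
    ext y
    exact ⟨fun ⟨L, hL⟩ => ⟨FreeMonoid.ofList L, by simpa [FreeMonoid.lift_apply] using hL⟩,
      fun ⟨w, hw⟩ => ⟨w.toList, by simpa [FreeMonoid.lift_apply] using hw⟩⟩
  rw [hrange, ← Algebra.adjoin_eq_span, hx, Algebra.top_toSubmodule]

theorem LinearMap.map_list_prod_append_comm {x : ι → A} {φ : A →ₗ[R] M}
    (hrot : ∀ L j, φ ((L ++ [j]).map x).prod = φ ((j :: L).map x).prod) (L L' : List ι) :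
    φ ((L ++ L').map x).prod = φ ((L' ++ L).map x).prod := by
  induction L' generalizing L with
  | nil => simp
  | cons j L' ih =>
    calc φ ((L ++ j :: L').map x).prod = φ ((L' ++ (L ++ [j])).map x).prod := by
          rw [← ih, List.append_assoc, List.singleton_append]
      _ = φ ((j :: (L' ++ L)).map x).prod := by rw [← List.append_assoc, hrot]
      _ = φ ((j :: L' ++ L).map x).prod := rfl

theorem LinearMap.map_mul_comm_of_list_prod_rotate {x : ι → A} {φ : A →ₗ[R] M}
    (hspan : Submodule.span R (Set.range fun L : List ι => (L.map x).prod) = ⊤)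
    (hrot : ∀ L j, φ ((L ++ [j]).map x).prod = φ ((j :: L).map x).prod) (f g : A) :
    φ (f * g) = φ (g * f) := by
  have : (LinearMap.mul R A).compr₂ φ = (LinearMap.mul R A).flip.compr₂ φ :=
    LinearMap.ext_on_range hspan fun L => LinearMap.ext_on_range hspan fun L' => by
      simpa [← List.prod_append, ← List.map_append] using map_list_prod_append_comm hrot L L'
  exact LinearMap.congr_fun₂ this f g

end ListProd

theorem Fin.eq_of_rev_eq_self {n : ℕ} {a b : Fin n} (ha : a.rev = a) (hb : b.rev = b) :
    a = b := by
  have ha' := congrArg Fin.val ha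
  have hb' := congrArg Fin.val hb
  rw [Fin.val_rev] at ha' hb'
  omega

namespace Multiset

variable {n : ℕ}

theorem map_rev_cons_cons_rev_iff (a : Fin n) (S : Multiset (Fin n)) :
    (a ::ₘ a.rev ::ₘ S).map Fin.rev = a ::ₘ a.rev ::ₘ S ↔ S.map Fin.rev = S := by
  rw [map_cons, map_cons, Fin.rev_rev, cons_swap, cons_inj_right, cons_inj_right]

/-- Companions `a ≠ a.rev` cancel in pairs; what remains is an even power of `f` at the middle
index, the only fixed point of `Fin.rev`. -/
theorem prod_map_eq_one_of_map_rev_eq {M : Type*} [CommMonoid M] {f : Fin n → M}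
    (hf : ∀ a, f a * f a.rev = 1) (S : Multiset (Fin n)) (hS : S.map Fin.rev = S)
    (heven : Even (card S)) : (S.map f).prod = 1 := by
  induction hk : card S using Nat.strong_induction_on generalizing S with
  | _ k ih =>
    by_cases hfix : ∀ b ∈ S, b.rev = b
    · rcases S.empty_or_exists_mem with rfl | ⟨b, hb⟩
      · simp
      obtain ⟨r, hr⟩ := heven
      rw [eq_replicate_card.mpr fun c hc => Fin.eq_of_rev_eq_self (hfix c hc) (hfix b hb),
        map_replicate, prod_replicate, hr, pow_add, ← mul_pow]
      have hb2 := hf b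
      rw [hfix b hb] at hb2
      rw [hb2, one_pow]
    push Not at hfix
    obtain ⟨b, hb, hbrev⟩ := hfix
    have hrev : b.rev ∈ S.erase b :=
      (mem_erase_of_ne hbrev).mpr (hS ▸ mem_map_of_mem Fin.rev hb)
    set S' := (S.erase b).erase b.rev
    have hS' : S = b ::ₘ b.rev ::ₘ S' := by rw [cons_erase hrev, cons_erase hb]
    rw [hS'] at hS heven hk ⊢
    rw [map_cons, map_cons, prod_cons, prod_cons,
      ih (card S') (by simp [← hk]) S' ((map_rev_cons_cons_rev_iff b S').mp hS)
        (by simpa [Nat.even_add_one] using heven) rfl, mul_one, hf]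

end Multiset

namespace TwistedPlane

variable {n : ℕ} (q : Fin n → Fin n → ℂ)

theorem X_mul_X (a b : Fin n) : X q a * X q b = q a b • (X q b * X q a) := by
  simpa [X] using RingQuot.mkAlgHom_rel ℂ (show twistRel q _ _ from ⟨a, b, rfl, rfl⟩)

theorem list_prod_mul_X (L : List (Fin n)) (j : Fin n) :
    (L.map (X q)).prod * X q j = (L.map (q · j)).prod • ((j :: L).map (X q)).prod := by
  induction L with
  | nil => simp
  | cons a L ih =>
    simp only [List.map_cons, List.prod_cons] at ih ⊢
    rw [mul_assoc, ih, mul_smul_comm, ← mul_assoc, X_mul_X, smul_mul_assoc, smul_smul,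
      mul_comm, mul_assoc]

theorem adjoin_range_X : Algebra.adjoin ℂ (Set.range (X q)) = ⊤ := by
  rw [show X q = RingQuot.mkAlgHom ℂ (twistRel q) ∘ FreeAlgebra.ι ℂ from rfl, Set.range_comp,
    ← AlgHom.map_adjoin, FreeAlgebra.adjoin_range_ι, Algebra.map_top,
    (AlgHom.range_eq_top _).mpr (RingQuot.mkAlgHom_surjective ℂ _)]

def monSpan (P : Multiset (Fin n) → Prop) : Submodule ℂ (TwistedPlane q) :=
  Submodule.span ℂ ((fun L : List (Fin n) => (L.map (X q)).prod) '' {L | P L})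

variable {q}

theorem list_prod_mem_monSpan {P : Multiset (Fin n) → Prop} {L : List (Fin n)} (hL : P L) :
    (L.map (X q)).prod ∈ monSpan q P :=
  Submodule.subset_span ⟨L, hL, rfl⟩

theorem monSpan_mono {P Q : Multiset (Fin n) → Prop} (hPQ : ∀ S, P S → Q S) :
    monSpan q P ≤ monSpan q Q :=
  Submodule.span_mono (Set.image_mono fun _ hL => hPQ _ hL)

theorem monSpan_le_ker {P : Multiset (Fin n) → Prop} {T : Module.End ℂ (TwistedPlane q)}
    (hT : ∀ L : List (Fin n), P L → T (L.map (X q)).prod = 0) : monSpan q P ≤ LinearMap.ker T :=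
  Submodule.span_le.mpr <| by
    rintro _ ⟨L, hL, rfl⟩
    exact hT L hL

theorem X_mul_mem_monSpan {P Q : Multiset (Fin n) → Prop} (a : Fin n)
    (hPQ : ∀ S, P S → Q (a ::ₘ S)) {y : TwistedPlane q} (hy : y ∈ monSpan q P) :
    X q a * y ∈ monSpan q Q := by
  have : monSpan q P ≤ (monSpan q Q).comap (LinearMap.mulLeft ℂ (X q a)) :=
    Submodule.span_le.mpr <| by
      rintro _ ⟨L, hL, rfl⟩
      exact list_prod_mem_monSpan (L := a :: L) (hPQ _ hL)
  exact this hy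

end TwistedPlane

namespace TwistedPlane

variable {n : ℕ} {q : Fin n → Fin n → ℂ}

structure IsTwistedPartialDerivs (D : Fin n → Module.End ℂ (TwistedPlane q)) : Prop where
  map_one : ∀ s, D s 1 = 0
  map_X_mul : ∀ s a f, D s (X q a * f) = (if a = s then f else 0) + q a s • (X q a * D s f)

def laplacian (D : Fin n → Module.End ℂ (TwistedPlane q)) : Module.End ℂ (TwistedPlane q) :=
  ∑ j, D j * D j.rev

variable {D : Fin n → Module.End ℂ (TwistedPlane q)}

namespace IsTwistedPartialDerivs

theorem apply_list_prod_mem_monSpan (hD : IsTwistedPartialDerivs D) (s : Fin n) (L : List (Fin n)) :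
    D s (L.map (X q)).prod ∈ monSpan q (s ::ₘ · = L) := by
  induction L with
  | nil => simp [hD.map_one]
  | cons a L ih =>
    rw [List.map_cons, List.prod_cons, hD.map_X_mul]
    refine Submodule.add_mem _ ?_ (Submodule.smul_mem _ _ (X_mul_mem_monSpan a ?_ ih))
    · split_ifs with has
      · exact list_prod_mem_monSpan (by rw [has]; rfl)
      · exact Submodule.zero_mem _
    · intro S hS
      rw [Multiset.cons_swap, hS]
      rfl

theorem mem_monSpan (hD : IsTwistedPartialDerivs D) {P Q : Multiset (Fin n) → Prop} (s : Fin n)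
    (hPQ : ∀ S, P (s ::ₘ S) → Q S) {y : TwistedPlane q} (hy : y ∈ monSpan q P) :
    D s y ∈ monSpan q Q := by
  have : monSpan q P ≤ (monSpan q Q).comap (D s) :=
    Submodule.span_le.mpr <| by
      rintro _ ⟨L, hL, rfl⟩
      exact monSpan_mono (fun S (hS : s ::ₘ S = L) => hPQ S (hS ▸ hL)) (hD.apply_list_prod_mem_monSpan s L)
  exact this hy

theorem laplacian_mem_monSpan (hD : IsTwistedPartialDerivs D) {P : Multiset (Fin n) → Prop}
    {y : TwistedPlane q} (hy : y ∈ monSpan q P) :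
    laplacian D y ∈ monSpan q (fun S => ∃ j, P (j ::ₘ j.rev ::ₘ S)) := by
  rw [laplacian, LinearMap.sum_apply]
  exact Submodule.sum_mem _ fun j _ => hD.mem_monSpan j
    (fun S hS => ⟨j, Multiset.cons_swap j j.rev S ▸ hS⟩) (hD.mem_monSpan j.rev (fun S hS => hS) hy)

/-- Each application of `Δ` removes a companion pair `{j, j'}` from the indices. -/
theorem laplacian_pow_list_prod_eq_zero (hD : IsTwistedPartialDerivs D) (m : ℕ)
    (L : List (Fin n)) (hL : (L : Multiset (Fin n)).map Fin.rev ≠ L) (hlen : L.length ≤ 2 * m) :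
    (laplacian D ^ m) (L.map (X q)).prod = 0 := by
  induction m generalizing L with
  | zero => simp_all
  | succ m ih =>
    rw [pow_succ, Module.End.mul_apply]
    refine monSpan_le_ker (fun L' ⟨j, hj⟩ => ih L' ?_ ?_)
      (hD.laplacian_mem_monSpan (list_prod_mem_monSpan (P := (· = L)) rfl))
    · rwa [← hj, Ne, Multiset.map_rev_cons_cons_rev_iff] at hL
    · have := congrArg Multiset.card hj
      simp only [Multiset.card_cons, Multiset.coe_card] at this
      omega

end IsTwistedPartialDerivs

end TwistedPlane

namespace TwistedPlane

variable {n : ℕ} {q : Fin n → Fin n → ℂ}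

theorem IsTwistedPartialDerivs.map_list_prod_eq_zero_of_map_rev_ne
    {D : Fin n → Module.End ℂ (TwistedPlane q)} (hD : IsTwistedPartialDerivs D)
    {H : TwistedPlane q →ₗ[ℂ] ℂ} {c : ℂ} (hc : c ≠ 0) {m : ℕ} {L : List (Fin n)}
    (hL : (L : Multiset (Fin n)).map Fin.rev ≠ L) (hlen : L.length = 2 * m)
    (hΔ : (laplacian D ^ m) (L.map (X q)).prod = (c * H (L.map (X q)).prod) • 1) :
    H (L.map (X q)).prod = 0 := by
  rw [hD.laplacian_pow_list_prod_eq_zero m L hL hlen.le, eq_comm, smul_eq_zero] at hΔ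
  rcases hΔ with hcH | hone
  · exact (mul_eq_zero.mp hcH).resolve_left hc
  · rw [← mul_one (L.map (X q)).prod, hone, mul_zero, map_zero]

/-- Moving `x^j` across the other generators costs `Π_k q(i_k, j)`, which is `1` as soon as the
indices pair up into an even number of companions. -/
theorem map_list_prod_append_singleton (h1 : ∀ a, q a a = 1) (hq : ∀ a j, q a j * q a.rev j = 1)
    {H : TwistedPlane q →ₗ[ℂ] ℂ}
    (hH : ∀ L : List (Fin n), H (L.map (X q)).prod ≠ 0 →
      (L : Multiset (Fin n)).map Fin.rev = L ∧ Even L.length)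
    (L : List (Fin n)) (j : Fin n) :
    H ((L ++ [j]).map (X q)).prod = H ((j :: L).map (X q)).prod := by
  rw [List.map_append, List.prod_append, List.map_singleton, List.prod_singleton,
    list_prod_mul_X, map_smul, smul_eq_mul]
  by_cases h0 : H ((j :: L).map (X q)).prod = 0
  · rw [h0, mul_zero]
  obtain ⟨hrev, heven⟩ := hH _ h0
  have hprod := Multiset.prod_map_eq_one_of_map_rev_eq (fun a => hq a j) _ hrev
    (by simpa using heven)
  rw [← Multiset.cons_coe, Multiset.map_cons, Multiset.prod_cons, h1, one_mul,
    Multiset.map_coe, Multiset.prod_coe] at hprod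
  rw [hprod, one_mul]

theorem haarNormalizer_ne_zero (N m : ℕ) :
    (2 ^ m * (m.factorial : ℂ) * ∏ k ∈ Finset.range m, ((N : ℂ) + 1 + 2 * k)) ≠ 0 := by
  have : 0 < 2 ^ m * m.factorial * ∏ k ∈ Finset.range m, (N + 1 + 2 * k) := by positivity
  exact_mod_cast this.ne'

end TwistedPlane

open TwistedPlane in
theorem haar_is_trace_general {N : ℕ} (q : Fin (N + 1) → Fin (N + 1) → ℂ)
    (h1 : ∀ a, q a a = 1)
    (h3 : ∀ a b, q a b * q a (Fin.rev b) = 1)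
    (h4 : ∀ a b, q a b = q (Fin.rev a) (Fin.rev b))
    (D : Fin (N + 1) → Module.End ℂ (TwistedPlane q))
    (hD1 : ∀ s, D s 1 = 0)
    (hD2 : ∀ s a f, D s (X q a * f) =
      (if a = s then f else 0) + q a s • (X q a * D s f))
    (H : TwistedPlane q →ₗ[ℂ] ℂ)
    (Hodd : ∀ (m : ℕ) (i : Fin (2 * m + 1) → Fin (N + 1)),
      H ((List.ofFn fun k => X q (i k)).prod) = 0)
    (Heven : ∀ (m : ℕ) (i : Fin (2 * m) → Fin (N + 1)),
      ((∑ j, D j * D (Fin.rev j)) ^ m) ((List.ofFn fun k => X q (i k)).prod)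
        = ((2 ^ m * (m.factorial : ℂ) * ∏ k ∈ Finset.range m, ((N : ℂ) + 1 + 2 * k))
            * H ((List.ofFn fun k => X q (i k)).prod)) • 1) :
    (∀ f g : TwistedPlane q, H (f * g) = H (g * f)) ∧
    (∀ (L : List (Fin (N + 1))) (j : Fin (N + 1)),
      Multiset.map Fin.rev (↑(L ++ [j]) : Multiset (Fin (N + 1)))
          = (↑(L ++ [j]) : Multiset (Fin (N + 1))) →
        H ((L.map (X q)).prod * X q j) = H (X q j * (L.map (X q)).prod)) := by
  have hD : IsTwistedPartialDerivs D := ⟨hD1, hD2⟩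
  have hq (a j : Fin (N + 1)) : q a j * q a.rev j = 1 := by
    rw [h4 a.rev, Fin.rev_rev]
    exact h3 a j
  have hH (L : List (Fin (N + 1))) (hL : H (L.map (X q)).prod ≠ 0) :
      (L : Multiset (Fin (N + 1))).map Fin.rev = L ∧ Even L.length := by
    rcases Nat.even_or_odd' L.length with ⟨m, hm | hm⟩
    · refine ⟨by_contra fun hrev => hL ?_, ⟨m, by omega⟩⟩
      refine hD.map_list_prod_eq_zero_of_map_rev_ne (haarNormalizer_ne_zero N m) hrev hm ?_
      obtain ⟨i, rfl⟩ := L.exists_ofFn_eq hm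
      rw [List.map_ofFn]
      exact Heven m i
    · obtain ⟨i, rfl⟩ := L.exists_ofFn_eq hm
      rw [List.map_ofFn] at hL
      exact absurd (Hodd m i) hL
  have htr := LinearMap.map_mul_comm_of_list_prod_rotate
    (Algebra.span_range_list_prod_of_adjoin_eq_top (adjoin_range_X q))
    (map_list_prod_append_singleton h1 hq hH)
  exact ⟨htr, fun L j _ => htr _ _⟩

/-- the Haar functional `h` on the twisted sphere `𝕊_q^N` is a
trace: `h(fg) = h(gf)`.  Stated on the plane `ℝ_q^{N+1}` through the functional
`h_ℝ` (which induces `h`): `h_ℝ` is tracial, and moreover on a monomial whose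
multiset of indices is a union of companion pairs `{j, j'}` (closed under
`Fin.rev`), cyclically rotating the last generator to the front leaves the
value unchanged. -/
theorem haar_is_trace {N : ℕ} (q : Fin (N + 1) → Fin (N + 1) → ℂ)
    (h1 : ∀ a, q a a = 1)
    (h2 : ∀ a b, q a b * q b a = 1)
    (h3 : ∀ a b, q a b * q a (Fin.rev b) = 1)
    (h4 : ∀ a b, q a b = q (Fin.rev a) (Fin.rev b))
    (D : Fin (N + 1) → Module.End ℂ (TwistedPlane q))
    (hD1 : ∀ s, D s 1 = 0)
    (hD2 : ∀ s a f, D s (X q a * f) =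
      (if a = s then f else 0) + q a s • (X q a * D s f))
    (H : TwistedPlane q →ₗ[ℂ] ℂ)
    (Hodd : ∀ (m : ℕ) (i : Fin (2 * m + 1) → Fin (N + 1)),
      H ((List.ofFn fun k => X q (i k)).prod) = 0)
    (Heven : ∀ (m : ℕ) (i : Fin (2 * m) → Fin (N + 1)),
      ((∑ j, D j * D (Fin.rev j)) ^ m) ((List.ofFn fun k => X q (i k)).prod)
        = ((2 ^ m * (m.factorial : ℂ) * ∏ k ∈ Finset.range m, ((N : ℂ) + 1 + 2 * k))
            * H ((List.ofFn fun k => X q (i k)).prod)) • 1) :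
    (∀ f g : TwistedPlane q, H (f * g) = H (g * f)) ∧
    (∀ (L : List (Fin (N + 1))) (j : Fin (N + 1)),
      Multiset.map Fin.rev (↑(L ++ [j]) : Multiset (Fin (N + 1)))
          = (↑(L ++ [j]) : Multiset (Fin (N + 1))) →
        H ((L.map (X q)).prod * X q j) = H (X q j * (L.map (X q)).prod)) :=
  haar_is_trace_general q h1 h3 h4 D hD1 hD2 H Hodd Heven
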